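/- Suppose a model m(x) = h_s(x_s) + h(x) where h_s is the spurious-coordinate Bayes-optimal classifier satisfying φ(f_s(x_s)·h_s(x_s)) = λ for all x, and h(x) = 0 identically. Then the population gradient of the logistic loss over D_λ with respect to a weight vector w_i of a ReLU neuron in h equals −2λ(1−λ)·E_{x∼D_unif}[f_c(x_c)·a_i·σ'(w_i^⊤x)·x]; consequently it is exactly 4λ(1−λ) times the corresponding gradient when there is no spurious correlation (λ = 1/2). -/

import Mathlib

/-! With `h ≡ 0`, the residual `1 - φ(y·h_s(x_s))` of a sample only depends on whether the
spurious label agrees with `y`: it is `1 - λ` on the `λ`-weighted part `D_same` and `λ` on the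
`(1 - λ)`-weighted part `D_diff`. Since `f_c` is unbiased, both parts carry uniform mass `1/2`, so
the `D_λ`-density times the residual is the constant `2λ(1 - λ)` times the uniform density, and the
gradient is `-2λ(1 - λ)·E_unif[f_c·a·σ'(w^⊤x)·x]`. At `λ = 1/2` the Bayes-optimal spurious part
is `0` (as `φ 0 = 1/2`), so the same formula applies there with factor `-1/2`. -/

open scoped Classical

noncomputable section

/-- Boolean vectors of length `m`. -/
abbrev BVec (m : ℕ) := Fin m → Bool

/-- The boolean hypercube split into core, spurious and noise blocks. -/
abbrev Cube (c s u : ℕ) := BVec c × BVec s × BVec u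

/-- Uniform probability mass on the hypercube. -/
def pUnif (c s u : ℕ) : Cube c s u → ℝ := fun _ => ((2 : ℝ) ^ (c + s + u))⁻¹

/-- `D_same`: uniform conditioned on the core and spurious features agreeing. -/
def pSame (c s u : ℕ) (fc : BVec c → ℝ) (fs : BVec s → ℝ) : Cube c s u → ℝ := fun x =>
  if fc x.1 = fs x.2.1 then
    pUnif c s u x / (∑ y : Cube c s u, if fc y.1 = fs y.2.1 then pUnif c s u y else 0)
  else 0

/-- `D_diff`: uniform conditioned on the core and spurious features disagreeing. -/
def pDiff (c s u : ℕ) (fc : BVec c → ℝ) (fs : BVec s → ℝ) : Cube c s u → ℝ := fun x =>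
  if fc x.1 ≠ fs x.2.1 then
    pUnif c s u x / (∑ y : Cube c s u, if fc y.1 ≠ fs y.2.1 then pUnif c s u y else 0)
  else 0

/-- `D_λ := λ·D_same + (1−λ)·D_diff`. -/
def pLam (c s u : ℕ) (fc : BVec c → ℝ) (fs : BVec s → ℝ) (lam : ℝ) : Cube c s u → ℝ :=
  fun x => lam * pSame c s u fc fs x + (1 - lam) * pDiff c s u fc fs x

/-- The sigmoid function. -/
def sigmoid (t : ℝ) : ℝ := (1 + Real.exp (-t))⁻¹

/-- Subgradient of the ReLU. -/
def reluDeriv (t : ℝ) : ℝ := if 0 < t then 1 else 0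

/-- The real value of a boolean bit: `true ↦ 1`, `false ↦ -1`. -/
def bval (b : Bool) : ℝ := if b then 1 else -1

/-- The `j`-th real coordinate of a point of the cube. -/
def coordVal (c s u : ℕ) (x : Cube c s u) : Fin c ⊕ Fin s ⊕ Fin u → ℝ
  | Sum.inl i => bval (x.1 i)
  | Sum.inr (Sum.inl i) => bval (x.2.1 i)
  | Sum.inr (Sum.inr i) => bval (x.2.2 i)

/-- Inner product of a weight vector with a cube point. -/
def dotW (c s u : ℕ) (w : Fin c ⊕ Fin s ⊕ Fin u → ℝ) (x : Cube c s u) : ℝ :=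
  ∑ j, w j * coordVal c s u x j

/-- Population gradient (coordinate `j`) over `D_λ` of the logistic loss of the model
`m(x) = h_s(x_s) + h(x)` with `h ≡ 0`, with respect to the weight vector of a ReLU neuron
`a·σ(w^⊤x)` of `h`; the per-sample gradient is `−y·(1−φ(y·h_s(x_s)))·a·σ'(w^⊤x)·x_j`. -/
def gradExpr (c s u : ℕ) (fc : BVec c → ℝ) (fs : BVec s → ℝ) (lam : ℝ)
    (hs : BVec s → ℝ) (a : ℝ) (w : Fin c ⊕ Fin s ⊕ Fin u → ℝ)
    (j : Fin c ⊕ Fin s ⊕ Fin u) : ℝ :=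
  ∑ x : Cube c s u,
    pLam c s u fc fs lam x *
      (-(fc x.1) * (1 - sigmoid (fc x.1 * hs x.2.1)) * a * reluDeriv (dotW c s u w x) *
        coordVal c s u x j)

lemma sigmoid_zero : sigmoid 0 = 1 / 2 := by
  norm_num [sigmoid]

lemma sigmoid_neg (t : ℝ) : sigmoid (-t) = 1 - sigmoid t := by
  have h : Real.exp (-t) * Real.exp t = 1 := by rw [← Real.exp_add, neg_add_cancel, Real.exp_zero]
  unfold sigmoid
  rw [neg_neg]
  field_simp
  linarith

lemma eq_neg_of_ne_of_eq_one_or_eq_neg_one {a b : ℝ} (ha : a = 1 ∨ a = -1)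
    (hb : b = 1 ∨ b = -1) (h : a ≠ b) : a = -b := by
  rcases ha with rfl | rfl <;> rcases hb with rfl | rfl <;> simp_all

lemma ite_eq_div_two_add_div_two_mul {a b : ℝ} (ha : a = 1 ∨ a = -1) (hb : b = 1 ∨ b = -1) (t : ℝ) :
    (if a = b then t else 0) = t / 2 + t / 2 * (a * b) := by
  rcases ha with rfl | rfl <;> rcases hb with rfl | rfl <;> norm_num

section Cube

variable {c s u : ℕ} {fc : BVec c → ℝ} {fs : BVec s → ℝ}

lemma sum_pUnif : ∑ x : Cube c s u, pUnif c s u x = 1 := by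
  simp [pUnif, Finset.card_univ, ← pow_add, ← add_assoc]

lemma sum_pUnif_mul_eq_zero (hfc_unb : ∑ v : BVec c, fc v = 0) (g : BVec s × BVec u → ℝ) :
    ∑ x : Cube c s u, pUnif c s u x * (fc x.1 * g x.2) = 0 := by
  simp only [pUnif, ← Finset.mul_sum, Fintype.sum_prod_type (f := fun x => fc x.1 * g x.2),
    ← Finset.sum_mul, hfc_unb, zero_mul, mul_zero]

variable (hfc : ∀ v, fc v = 1 ∨ fc v = -1) (hfs : ∀ v, fs v = 1 ∨ fs v = -1)
  (hfc_unb : ∑ v : BVec c, fc v = 0)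
include hfc hfs hfc_unb

lemma sum_pUnif_agree :
    (∑ x : Cube c s u, if fc x.1 = fs x.2.1 then pUnif c s u x else 0) = 1 / 2 := by
  have h := sum_pUnif_mul_eq_zero (u := u) hfc_unb (fun y => fs y.1)
  simp only [ite_eq_div_two_add_div_two_mul (hfc _) (hfs _), Finset.sum_add_distrib, div_mul_eq_mul_div,
    ← Finset.sum_div, sum_pUnif, h]
  norm_num

lemma sum_pUnif_disagree :
    (∑ x : Cube c s u, if fc x.1 ≠ fs x.2.1 then pUnif c s u x else 0) = 1 / 2 := by
  have h (x : Cube c s u) : (if fc x.1 ≠ fs x.2.1 then pUnif c s u x else 0)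
      = pUnif c s u x - if fc x.1 = fs x.2.1 then pUnif c s u x else 0 := by
    split_ifs <;> simp_all
  simp only [h, Finset.sum_sub_distrib, sum_pUnif, sum_pUnif_agree hfc hfs hfc_unb]
  norm_num

lemma pLam_mul_one_sub_sigmoid {lam : ℝ} {hs : BVec s → ℝ}
    (hbayes : ∀ v, sigmoid (fs v * hs v) = lam) (x : Cube c s u) :
    pLam c s u fc fs lam x * (1 - sigmoid (fc x.1 * hs x.2.1))
      = 2 * lam * (1 - lam) * pUnif c s u x := by
  unfold pLam pSame pDiff
  rw [sum_pUnif_agree hfc hfs hfc_unb, sum_pUnif_disagree hfc hfs hfc_unb]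
  by_cases h : fc x.1 = fs x.2.1
  · rw [if_pos h, if_neg (not_not_intro h), h, hbayes]
    ring
  · rw [if_neg h, if_pos h, eq_neg_of_ne_of_eq_one_or_eq_neg_one (hfc _) (hfs _) h, neg_mul,
      sigmoid_neg, hbayes]
    ring

lemma gradExpr_eq {lam : ℝ} {hs : BVec s → ℝ} (hbayes : ∀ v, sigmoid (fs v * hs v) = lam)
    (a : ℝ) (w : Fin c ⊕ Fin s ⊕ Fin u → ℝ) (j : Fin c ⊕ Fin s ⊕ Fin u) :
    gradExpr c s u fc fs lam hs a w j = -2 * lam * (1 - lam) *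
      ∑ x : Cube c s u,
        pUnif c s u x * (fc x.1 * a * reluDeriv (dotW c s u w x) * coordVal c s u x j) := by
  rw [gradExpr, Finset.mul_sum]
  refine Finset.sum_congr rfl fun x _ => ?_
  linear_combination (-(fc x.1) * a * reluDeriv (dotW c s u w x) * coordVal c s u x j) *
    pLam_mul_one_sub_sigmoid hfc hfs hfc_unb hbayes x

end Cube

theorem grad_slowdown_general (c s u : ℕ) (fc : BVec c → ℝ) (fs : BVec s → ℝ)
    (hfc : ∀ v, fc v = 1 ∨ fc v = -1) (hfs : ∀ v, fs v = 1 ∨ fs v = -1)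
    (hfc_unb : (∑ v : BVec c, fc v) = 0)
    (lam : ℝ)
    (hs : BVec s → ℝ) (hbayes : ∀ v, sigmoid (fs v * hs v) = lam)
    (a : ℝ) (w : Fin c ⊕ Fin s ⊕ Fin u → ℝ) :
    ∀ j : Fin c ⊕ Fin s ⊕ Fin u,
      gradExpr c s u fc fs lam hs a w j
          = -2 * lam * (1 - lam) *
              ∑ x : Cube c s u,
                pUnif c s u x *
                  (fc x.1 * a * reluDeriv (dotW c s u w x) * coordVal c s u x j) ∧
      gradExpr c s u fc fs lam hs a w j
          = 4 * lam * (1 - lam) * gradExpr c s u fc fs (1 / 2) (fun _ => 0) a w j := by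
  intro j
  have hbayes_half : ∀ v, sigmoid (fs v * 0) = 1 / 2 := fun _ => by
    rw [mul_zero, sigmoid_zero]
  rw [gradExpr_eq hfc hfs hfc_unb hbayes, gradExpr_eq hfc hfs hfc_unb hbayes_half]
  exact ⟨rfl, by ring⟩

/-- If `h_s` is the spurious Bayes-optimal classifier (`φ(f_s·h_s) = λ`) and `h ≡ 0`, the
population gradient w.r.t. the weights of a neuron of `h` equals
`−2λ(1−λ)·E_unif[f_c·a·σ'(w^⊤x)·x]`, i.e. exactly `4λ(1−λ)` times the gradient at `λ = 1/2`
(no spurious correlation, where the Bayes-optimal spurious part is `0`). -/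
theorem grad_slowdown (c s u : ℕ) (fc : BVec c → ℝ) (fs : BVec s → ℝ)
    (hfc : ∀ v, fc v = 1 ∨ fc v = -1) (hfs : ∀ v, fs v = 1 ∨ fs v = -1)
    (hfc_unb : (∑ v : BVec c, fc v) = 0) (hfs_unb : (∑ v : BVec s, fs v) = 0)
    (hpos_same : 0 < ∑ y : Cube c s u, if fc y.1 = fs y.2.1 then pUnif c s u y else 0)
    (hpos_diff : 0 < ∑ y : Cube c s u, if fc y.1 ≠ fs y.2.1 then pUnif c s u y else 0)
    (lam : ℝ) (hlam₁ : 1 / 2 ≤ lam) (hlam₂ : lam < 1)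
    (hs : BVec s → ℝ) (hbayes : ∀ v, sigmoid (fs v * hs v) = lam)
    (a : ℝ) (w : Fin c ⊕ Fin s ⊕ Fin u → ℝ) :
    ∀ j : Fin c ⊕ Fin s ⊕ Fin u,
      gradExpr c s u fc fs lam hs a w j
          = -2 * lam * (1 - lam) *
              ∑ x : Cube c s u,
                pUnif c s u x *
                  (fc x.1 * a * reluDeriv (dotW c s u w x) * coordVal c s u x j) ∧
      gradExpr c s u fc fs lam hs a w j
          = 4 * lam * (1 - lam) * gradExpr c s u fc fs (1 / 2) (fun _ => 0) a w j :=
  grad_slowdown_general c s u fc fs hfc hfs hfc_unb lam hs hbayes a w
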